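/- arXiv:2008.06128 — 3 statements merged into one kernel-verified Lean document; each statement's English description precedes it below -/
import Mathlib

section
/- For any integers a and b, we have x_a t_{n-1,a} + u_{b-1} t_{n-1,b-1} = x_b t_{n-1,b} + u_{a-1} t_{n-1,a-1}. -/
/- Setting: a semifield `K` (commutative associative addition `add`, multiplicative
abelian group, distributivity), with `u, x : ℤ → K` being `n`-periodic families. -/

variable {K : Type*} [CommGroup K]

/-- The nonempty sum `f 0 + f 1 + ⋯ + f r` with respect to the binary operation `add`. -/
def addSum (add : K → K → K) (f : ℕ → K) : ℕ → K
  | 0 => f 0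
  | r + 1 => add (addSum add f r) (f (r + 1))

/-- The element `t_{r,j} = Σ_{k=0}^{r} (∏_{i=1}^{k} x_{j+i}) · (∏_{i=k+1}^{r} u_{j+i})`. -/
def tpoly (add : K → K → K) (u x : ℤ → K) (r : ℕ) (j : ℤ) : K :=
  addSum add
    (fun k => (∏ i ∈ Finset.Icc 1 k, x (j + i)) * ∏ i ∈ Finset.Icc (k + 1) r, u (j + i)) r

/-!
Both `x_j t_{n-1,j}` and `u_{j-1} t_{n-1,j-1}` are sums of the monomials
`m_k(j) = x_j ⋯ x_{j+k-1} · u_{j+k} ⋯ u_{j+n-1}`, over `k = 1, …, n` and `k = 0, …, n-1`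
respectively (the second one because `u_{j-1} = u_{j+n-1}`). The extreme monomials
`m_0(j)` and `m_n(j)` are products of `u` resp. `x` over a full period, hence independent of `j`,
so both sides of the identity are sums of the same terms.
-/

open Finset

section AddSum

variable {α : Type*} (add : α → α → α)

theorem addSum_congr {f g : ℕ → α} : ∀ {r : ℕ}, (∀ k ≤ r, f k = g k) →
    addSum add f r = addSum add g r
  | 0, h => h 0 le_rfl
  | r + 1, h => by
    rw [addSum, addSum, addSum_congr fun k hk => h k (hk.trans r.le_succ), h (r + 1) le_rfl]

theorem mul_addSum [Mul α] (hdistrib : ∀ a b c : α, a * add b c = add (a * b) (a * c))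
    (c : α) (f : ℕ → α) : ∀ r, c * addSum add f r = addSum add (fun k => c * f k) r
  | 0 => rfl
  | r + 1 => by rw [addSum, addSum, hdistrib, mul_addSum hdistrib c f r]

theorem addSum_succ' (hassoc : ∀ a b c : α, add (add a b) c = add a (add b c))
    (f : ℕ → α) : ∀ r, addSum add f (r + 1) = add (f 0) (addSum add (fun k => f (k + 1)) r)
  | 0 => rfl
  | r + 1 => by rw [addSum, addSum_succ' hassoc f r, hassoc]; rfl

/-- `add` need not be cancellative, so the common middle parts `A 1, …, A m` and
`B 1, …, B m` are matched rather than cancelled. -/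
theorem addSum_exchange (hassoc : ∀ a b c : α, add (add a b) c = add a (add b c))
    (hcomm : ∀ a b : α, add a b = add b a) {A B : ℕ → α} (m : ℕ)
    (hfirst : A 0 = B 0) (hlast : A (m + 1) = B (m + 1)) :
    add (addSum add (fun k => A (k + 1)) m) (addSum add B m) =
      add (addSum add (fun k => B (k + 1)) m) (addSum add A m) := by
  have : Std.Associative add := ⟨hassoc⟩
  have : Std.Commutative add := ⟨hcomm⟩
  cases m with
  | zero => simp only [addSum, hfirst, hlast, hcomm (B 1)]
  | succ m =>
    rw [addSum_succ' add hassoc B, addSum_succ' add hassoc A, addSum, addSum, hfirst, hlast]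
    ac_rfl

end AddSum

theorem prod_Icc_succ_eq_prod_Ico {M : Type*} [CommMonoid M] (f : ℕ → M) (a b : ℕ) :
    ∏ i ∈ Icc (a + 1) b, f i = ∏ i ∈ Ico a b, f (i + 1) := by
  rw [prod_Ico_add', Ico_add_one_right_eq_Icc]

theorem prod_range_add_eq_of_periodic {G : Type*} [CommGroup G] {n : ℕ} {f : ℤ → G}
    (hf : Function.Periodic f n) (a b : ℤ) :
    ∏ i ∈ range n, f (a + i) = ∏ i ∈ range n, f (b + i) := by
  -- shifting the window by one trades the factor `f j` for `f (j + n) = f j`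
  have hstep : Function.Periodic (fun j : ℤ => ∏ i ∈ range n, f (j + i)) 1 := by
    intro j
    have h := (prod_range_succ' (fun i : ℕ => f (j + i)) n).symm.trans
      (prod_range_succ (fun i : ℕ => f (j + i)) n)
    rw [hf j, Nat.cast_zero, add_zero] at h
    convert mul_right_cancel h using 3
    push_cast
    ring_nf
  simpa using hstep.int_mul (a - b) b

/-- The monomial `m_k(j)` of the header. -/
def tpolyMonomial (u x : ℤ → K) (n : ℕ) (j : ℤ) (k : ℕ) : K :=
  (∏ i ∈ range k, x (j + i)) * ∏ i ∈ Ico k n, u (j + i)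

section Monomial

variable (add : K → K → K) (u x : ℤ → K) {n : ℕ}

theorem mul_tpoly (hdistrib : ∀ a b c : K, a * add b c = add (a * b) (a * c)) (j : ℤ) :
    x j * tpoly add u x (n - 1) j =
      addSum add (fun k => tpolyMonomial u x n j (k + 1)) (n - 1) := by
  rw [tpoly, mul_addSum add hdistrib]
  refine addSum_congr add fun k _ => ?_
  rw [tpolyMonomial, ← mul_assoc, prod_range_succ', range_eq_Ico,
    prod_Icc_succ_eq_prod_Ico (fun i : ℕ => x (j + i)) 0 k,
    show Icc (k + 1) (n - 1) = Ico (k + 1) n by ext; simp; omega]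
  simp only [Nat.cast_zero, add_zero, mul_comm (x j)]

theorem mul_tpoly_sub_one (hdistrib : ∀ a b c : K, a * add b c = add (a * b) (a * c))
    (hn : 0 < n) (hu : Function.Periodic u n) (j : ℤ) :
    u (j - 1) * tpoly add u x (n - 1) (j - 1) =
      addSum add (tpolyMonomial u x n j) (n - 1) := by
  rw [tpoly, mul_addSum add hdistrib]
  refine addSum_congr add fun k hk => ?_
  obtain ⟨m, rfl⟩ : ∃ m, n = m + 1 := ⟨n - 1, by omega⟩
  rw [tpolyMonomial, prod_Ico_succ_top (by omega), Nat.add_sub_cancel,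
    prod_Icc_succ_eq_prod_Ico, prod_Icc_succ_eq_prod_Ico, ← range_eq_Ico,
    show u (j + m) = u (j - 1) by simpa using hu (j - 1)]
  simp only [Nat.cast_succ, sub_add_add_cancel]
  ac_rfl

end Monomial

/-- Lemma (e): `x_a t_{n-1,a} + u_{b-1} t_{n-1,b-1} = x_b t_{n-1,b} + u_{a-1} t_{n-1,a-1}`. -/
theorem tpoly_exchange (n : ℕ) (hn : 0 < n) (add : K → K → K)
    (hadd_assoc : ∀ a b c : K, add (add a b) c = add a (add b c))
    (hadd_comm : ∀ a b : K, add a b = add b a)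
    (hdistrib : ∀ a b c : K, a * add b c = add (a * b) (a * c))
    (u x : ℤ → K) (hu : ∀ i : ℤ, u (i + n) = u i) (hx : ∀ i : ℤ, x (i + n) = x i)
    (a b : ℤ) :
    add (x a * tpoly add u x (n - 1) a) (u (b - 1) * tpoly add u x (n - 1) (b - 1)) =
      add (x b * tpoly add u x (n - 1) b) (u (a - 1) * tpoly add u x (n - 1) (a - 1)) := by
  rw [mul_tpoly add u x hdistrib a, mul_tpoly add u x hdistrib b,
    mul_tpoly_sub_one add u x hdistrib hn hu a,
    mul_tpoly_sub_one add u x hdistrib hn hu b]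
  apply addSum_exchange add hadd_assoc hadd_comm
  · simpa only [tpolyMonomial, prod_range_zero, one_mul, ← range_eq_Ico]
      using prod_range_add_eq_of_periodic hu a b
  · simpa only [Nat.sub_add_cancel hn, tpolyMonomial, Ico_self, prod_empty, mul_one]
      using prod_range_add_eq_of_periodic hx a b
end

section
/- If y = f_u(x), then y_1 y_2 ⋯ y_n · x_1 x_2 ⋯ x_n = (u_1 u_2 ⋯ u_n)^2. -/
/- Setting: a semifield `K` (commutative associative addition `add`, multiplicative
abelian group, distributivity), a fixed `u ∈ K^n`, all `n`-tuples extended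
`n`-periodically to families indexed by `ℤ`. -/

variable {K : Type*} [CommGroup K]

open Fin.IntCast in
/-- The `n`-periodic extension of an `n`-tuple to a family indexed by `ℤ`. -/
def extend {n : ℕ} [NeZero n] (v : Fin n → K) : ℤ → K := fun i => v (i : Fin n)

/-- The map `f_u : K^n → K^n`, sending `x` to the `n`-tuple `y` with
`y_i = u_i · (u_{i-1} t_{n-1,i-1}) / (x_{i+1} t_{n-1,i+1})`. -/
def fu {n : ℕ} [NeZero n] (add : K → K → K) (u : Fin n → K) (x : Fin n → K) : Fin n → K :=
  fun i =>
    u i * (extend u ((i : ℤ) - 1) * tpoly add (extend u) (extend x) (n - 1) ((i : ℤ) - 1)) /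
      (extend x ((i : ℤ) + 1) * tpoly add (extend u) (extend x) (n - 1) ((i : ℤ) + 1))

/-! Write `U`, `X` for the periodic extensions of `u`, `x` and `T j = t_{n-1,j}`. Then
`y_i = u_i · U_{i-1} T_{i-1} / (X_{i+1} T_{i+1})`, and `T` is `n`-periodic because it only reads
the periodic families `U` and `X`. A product of an `n`-periodic family over `n` consecutive indices
does not depend on where the window starts, so `∏ y = (∏ u) · (∏ u) (∏ T) / ((∏ x) (∏ T))`. -/

open Fin.IntCast Fin.CommRing

theorem Function.Periodic.apply_intCast_val {M : Type*} {n : ℕ} [NeZero n] {f : ℤ → M}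
    (hf : Function.Periodic f n) (j : ℤ) : f ((j : Fin n) : ℕ) = f j := by
  have hmod : ((((j : Fin n) : ℕ) : ℤ)) = j - (j / n) • (n : ℤ) := by
    rw [Fin.val_intCast, Int.toNat_of_nonneg (Int.emod_nonneg _ (by simp [NeZero.ne n])),
      Int.emod_def, smul_eq_mul, mul_comm]
  rw [hmod, hf.sub_zsmul_eq]

theorem Function.Periodic.prod_fin_add {M : Type*} [CommMonoid M] {n : ℕ} [NeZero n]
    {f : ℤ → M} (hf : Function.Periodic f n) (c : ℤ) :
    ∏ i : Fin n, f (i + c) = ∏ i : Fin n, f i := by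
  calc ∏ i : Fin n, f (i + c) = ∏ i : Fin n, f ((i + (c : Fin n) : Fin n) : ℕ) := by
        refine Fintype.prod_congr _ _ fun i => ?_
        rw [← hf.apply_intCast_val, Int.cast_add, Int.cast_natCast, Fin.cast_val_eq_self]
    _ = ∏ i : Fin n, f i := Fintype.prod_equiv (Equiv.addRight (c : Fin n)) _ _ fun _ => rfl

theorem extend_periodic {M : Type*} {n : ℕ} [NeZero n] (v : Fin n → M) :
    Function.Periodic (extend v) n := by
  intro j
  simp [extend]

@[simp]
theorem extend_natCast_val {M : Type*} {n : ℕ} [NeZero n] (v : Fin n → M) (i : Fin n) :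
    extend v (i : ℕ) = v i := by
  simp [extend]

theorem tpoly_periodic {add : K → K → K} {u x : ℤ → K} {c : ℤ} (hu : Function.Periodic u c)
    (hx : Function.Periodic x c) (r : ℕ) : Function.Periodic (tpoly add u x r) c := by
  intro j
  simp only [tpoly, add_right_comm j c, hu (j + _), hx (j + _)]

theorem fu_prod_general (n : ℕ) [NeZero n] (add : K → K → K)
    (u : Fin n → K)
    (x y : Fin n → K) (hy : y = fu add u x) :
    (∏ i, y i) * ∏ i, x i = (∏ i, u i) ^ 2 := by
  subst hy
  have hT := tpoly_periodic (add := add) (extend_periodic u) (extend_periodic x) (n - 1)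
  simp only [fu, Finset.prod_div_distrib, Finset.prod_mul_distrib, sub_eq_add_neg,
    (extend_periodic u).prod_fin_add, (extend_periodic x).prod_fin_add, hT.prod_fin_add,
    extend_natCast_val]
  rw [← mul_assoc, mul_div_mul_right_eq_div, div_mul_cancel, sq]

/-- Theorem: if `y = f_u(x)`, then `y_1 ⋯ y_n · x_1 ⋯ x_n = (u_1 ⋯ u_n)^2`. -/
theorem fu_prod (n : ℕ) [NeZero n] (add : K → K → K)
    (hadd_assoc : ∀ a b c : K, add (add a b) c = add a (add b c))
    (hadd_comm : ∀ a b : K, add a b = add b a)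
    (hdistrib : ∀ a b c : K, a * add b c = add (a * b) (a * c))
    (u : Fin n → K)
    (x y : Fin n → K) (hy : y = fu add u x) :
    (∏ i, y i) * ∏ i, x i = (∏ i, u i) ^ 2 :=
  fu_prod_general n add u x y hy
end

section
/- For any snake λ (i.e., λ ∈ ℤ^n with λ_1 ≥ λ_2 ≥ ⋯ ≥ λ_n), the alternant a_{λ+ρ} is a multiple of a_ρ in the Laurent polynomial ring k[x_1^{±1},…,x_n^{±1}]. -/
/-- The ring of Laurent polynomials `k[x_1^{±1}, …, x_n^{±1}]` in `n` variables over `k`,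
realized as the monoid algebra of the group of Laurent monomials
(exponent vectors in `Fin n → ℤ`). -/
abbrev Laurent (k : Type*) [CommRing k] (n : ℕ) : Type _ := AddMonoidAlgebra k (Fin n → ℤ)

/-- The alternant `a_λ = Σ_{w ∈ S_n} sgn(w) x_{w(1)}^{λ_1} ⋯ x_{w(n)}^{λ_n}`. -/
noncomputable def alternant (k : Type*) [CommRing k] (n : ℕ) (lam : Fin n → ℤ) : Laurent k n :=
  ∑ w : Equiv.Perm (Fin n),
    (Equiv.Perm.sign w : ℤ) • AddMonoidAlgebra.single (lam ∘ ⇑w⁻¹) (1 : k)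

/-- The staircase `ρ = (n-1, n-2, …, 1, 0)` (written with `0`-based indices). -/
def rho (n : ℕ) : Fin n → ℤ := fun i => (n : ℤ) - 1 - (i : ℕ)

/-! Over `ℤ[x_1, …, x_n]`, write `det (x_j ^ e_i)` for an exponent vector `e ∈ ℕ^n`. Identifying
`x_a` with `x_b` makes two columns equal, so each `x_b - x_a` divides this determinant; these are
pairwise non-associated primes, so their product, the Vandermonde determinant, divides it too, and
for `e = ρ` the determinant is the Vandermonde determinant up to sign. Mapping to Laurent
polynomials over `k` and multiplying by a monomial `(x_1 ⋯ x_n)^c` that makes `λ - c` nonnegative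
gives the theorem. -/

theorem Finset.prod_dvd_of_prime_of_injOn_mk {M₀ ι : Type*} [CommMonoidWithZero M₀]
    [IsCancelMulZero M₀] {s : Finset ι} {p : ι → M₀} {a : M₀} (hp : ∀ i ∈ s, Prime (p i))
    (hinj : Set.InjOn (fun i => Associates.mk (p i)) s) (hdvd : ∀ i ∈ s, p i ∣ a) :
    ∏ i ∈ s, p i ∣ a := by
  classical
  have himage : ∏ q ∈ s.image (fun i => Associates.mk (p i)), q = ∏ i ∈ s, Associates.mk (p i) :=
    Finset.prod_image hinj
  rw [← Associates.mk_dvd_mk, ← Associates.finsetProd_mk, ← himage]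
  refine Finset.prod_primes_dvd _ ?_ ?_ <;> simp only [Finset.mem_image] <;>
    rintro _ ⟨i, hi, rfl⟩
  · exact Associates.prime_mk.mpr (hp i hi)
  · exact Associates.mk_dvd_mk.mpr (hdvd i hi)

namespace MvPolynomial

variable {σ R : Type*} [CommRing R]

theorem X_sub_X_dvd_sub_rename_update [DecidableEq σ] (a b : σ) (f : MvPolynomial σ R) :
    X a - X b ∣ f - rename (Function.update id a b) f := by
  -- `φ f` is `f` viewed as a polynomial in `X a` with the other variables in the coefficients.
  let φ : MvPolynomial σ R →ₐ[R] Polynomial (MvPolynomial σ R) :=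
    aeval (Function.update (fun t => Polynomial.C (X t)) a Polynomial.X)
  have heval : ∀ c, (φ f).eval c = aeval (Function.update X a c) f := by
    intro c
    induction f using MvPolynomial.induction_on with
    | C r => simp [φ]
    | add p q hp hq => simp [hp, hq]
    | mul_X p t hp =>
      simp only [map_mul, Polynomial.eval_mul, hp, aeval_X, φ]
      by_cases ht : t = a
      · subst ht; simp
      · simp [ht]
  have hid : Function.update (X : σ → MvPolynomial σ R) a (X a) = X := by simp
  have hren : Function.update (X : σ → MvPolynomial σ R) a (X b) = X ∘ Function.update id a b := by
    rw [Function.comp_update]; rfl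
  have h := Polynomial.sub_dvd_eval_sub (X a) (X b) (φ f)
  rwa [heval, heval, hid, hren, aeval_X_left_apply, ← rename_eq_aeval] at h

theorem prime_X_sub_X [DecidableEq σ] [IsDomain R] {a b : σ} (h : a ≠ b) :
    Prime (X a - X b : MvPolynomial σ R) := by
  let φ := (renameEquiv R (Equiv.optionSubtypeNe a).symm).trans
    (optionEquivLeft R {t : σ // t ≠ a})
  have hφ : φ (X a - X b) = Polynomial.X - Polynomial.C (X ⟨b, h.symm⟩) := by
    simp [φ, Equiv.optionSubtypeNe_symm_of_ne h.symm]
  rw [← MulEquiv.prime_iff φ.toMulEquiv]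
  exact hφ ▸ Polynomial.prime_X_sub_C _

theorem eq_of_X_sub_X_dvd [Nontrivial R] [LinearOrder σ] {i j k l : σ} (hij : i < j)
    (hkl : k < l) (hdvd : (X j - X i : MvPolynomial σ R) ∣ X l - X k) : i = k ∧ j = l := by
  have h := map_dvd (rename (R := R) (Function.update id j i)) hdvd
  rw [map_sub, map_sub, rename_X, rename_X, Function.update_self,
    Function.update_of_ne hij.ne, id_eq, sub_self, zero_dvd_iff, sub_eq_zero, rename_X, rename_X,
    X_inj] at h
  simp only [Function.update_apply, id] at h
  split_ifs at h <;> grind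

end MvPolynomial

section Alternant

open MvPolynomial

variable {n : ℕ} (R : Type*) [CommRing R]

noncomputable def alternantMatrix (e : Fin n → ℕ) :
    Matrix (Fin n) (Fin n) (MvPolynomial (Fin n) R) :=
  Matrix.of fun i j => X j ^ e i

variable {R}

theorem rename_update_det_alternantMatrix {a b : Fin n} (h : a ≠ b) (e : Fin n → ℕ) :
    rename (Function.update id a b) (alternantMatrix R e).det = 0 := by
  rw [AlgHom.map_det]
  exact Matrix.det_zero_of_column_eq h fun i => by
    simp [alternantMatrix, Function.update_of_ne h.symm]

theorem X_sub_X_dvd_det_alternantMatrix {a b : Fin n} (h : a ≠ b) (e : Fin n → ℕ) :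
    X a - X b ∣ (alternantMatrix R e).det := by
  simpa [rename_update_det_alternantMatrix h] using
    X_sub_X_dvd_sub_rename_update a b (alternantMatrix R e).det

theorem det_vandermonde_X_dvd_det_alternantMatrix [IsDomain R] (e : Fin n → ℕ) :
    (Matrix.vandermonde (X : Fin n → MvPolynomial (Fin n) R)).det ∣ (alternantMatrix R e).det := by
  rw [Matrix.det_vandermonde, Finset.prod_sigma']
  refine Finset.prod_dvd_of_prime_of_injOn_mk ?_ ?_ ?_ <;>
    simp only [Set.InjOn, Finset.mem_coe, Finset.mem_sigma, Finset.mem_univ, Finset.mem_Ioi,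
      true_and]
  · exact fun p hp => prime_X_sub_X hp.ne'
  · rintro ⟨i, j⟩ hij ⟨k, l⟩ hkl hassoc
    obtain ⟨rfl, rfl⟩ :=
      eq_of_X_sub_X_dvd hij hkl (Associates.mk_eq_mk_iff_associated.mp hassoc).dvd
    rfl
  · exact fun p hp => X_sub_X_dvd_det_alternantMatrix hp.ne' e

theorem associated_det_vandermonde_X_det_alternantMatrix_rho :
    Associated (Matrix.vandermonde (X : Fin n → MvPolynomial (Fin n) R)).det
      (alternantMatrix R fun i => n - 1 - i).det := by
  have h : (alternantMatrix R fun i : Fin n => n - 1 - i).transpose =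
      (Matrix.vandermonde X).submatrix id Fin.revPerm := by
    refine Matrix.ext fun i j => ?_
    simp only [alternantMatrix, Matrix.transpose_apply, Matrix.of_apply, Matrix.submatrix_apply,
      id, Matrix.vandermonde_apply, Fin.revPerm_apply, Fin.val_rev]
    congr 1
    omega
  rw [← Matrix.det_transpose (alternantMatrix R _), h, Matrix.det_permute']
  exact (associated_unit_mul_left _ _ ((Equiv.Perm.sign _).isUnit.map (Int.castRingHom _))).symm

end Alternant

section Laurent

open AddMonoidAlgebra MvPolynomial

variable {k : Type*} [CommRing k] {n : ℕ}

theorem alternant_eq_det (lam : Fin n → ℤ) :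
    alternant k n lam =
      (Matrix.of fun i j => (single (Pi.single j (lam i)) 1 : Laurent k n)).det := by
  rw [alternant, Matrix.det_apply]
  refine Fintype.sum_equiv (Equiv.inv _) _ _ fun w => ?_
  simp [Equiv.Perm.sign_inv, Finset.univ_sum_single, Function.comp_def, Units.smul_def]

theorem aeval_det_alternantMatrix (e : Fin n → ℕ) :
    aeval (fun j => (single (Pi.single j 1) 1 : Laurent k n)) (alternantMatrix ℤ e).det =
      alternant k n (fun i => e i) := by
  rw [alternant_eq_det, AlgHom.map_det]
  congr
  refine Matrix.ext fun i j => ?_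
  simp only [alternantMatrix, AlgHom.mapMatrix_apply, Matrix.map_apply, Matrix.of_apply, map_pow,
    aeval_X, single_pow, one_pow, ← Pi.single_nsmul, nsmul_one]

theorem alternant_add_const (lam : Fin n → ℤ) (c : ℤ) :
    alternant k n (fun i => lam i + c) = single (fun _ => c) 1 * alternant k n lam := by
  simp only [alternant, Finset.mul_sum, mul_smul_comm, single_mul_single, one_mul]
  congr! 3
  funext i
  simp [add_comm]

end Laurent

open AddMonoidAlgebra MvPolynomial

theorem alternant_rho_dvd_general (k : Type*) [CommRing k] (n : ℕ)
    (lam : Fin n → ℤ) :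
    ∃ s : Laurent k n, alternant k n (fun i => lam i + rho n i) = alternant k n (rho n) * s := by
  obtain ⟨c, hc⟩ := (Set.finite_range lam).bddBelow
  set e : Fin n → ℕ := fun i => (lam i - c + rho n i).toNat
  have he : (fun i => (e i : ℤ)) = fun i => lam i - c + rho n i := by
    funext i
    have := hc ⟨i, rfl⟩
    have := i.isLt
    simp only [e, rho]
    omega
  have hrho : (fun i : Fin n => ((n - 1 - i : ℕ) : ℤ)) = rho n := by
    funext i
    have := i.isLt
    simp only [rho]
    omega
  obtain ⟨s, hs⟩ := map_dvd (aeval fun j => (single (Pi.single j 1) 1 : Laurent k n))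
    (associated_det_vandermonde_X_det_alternantMatrix_rho.symm.dvd.trans
      (det_vandermonde_X_dvd_det_alternantMatrix (R := ℤ) e))
  rw [aeval_det_alternantMatrix, aeval_det_alternantMatrix, he, hrho] at hs
  refine ⟨single (fun _ => c) 1 * s, ?_⟩
  calc alternant k n (fun i => lam i + rho n i)
      = single (fun _ => c) 1 * alternant k n (fun i => lam i - c + rho n i) := by
        rw [← alternant_add_const]; congr; funext i; ring
    _ = alternant k n (rho n) * (single (fun _ => c) 1 * s) := by rw [hs]; ring

/-- Lemma: for any snake `λ` (i.e. `λ_1 ≥ λ_2 ≥ ⋯ ≥ λ_n`), the alternant `a_{λ+ρ}`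
is a multiple of `a_ρ` in the Laurent polynomial ring. -/
theorem alternant_rho_dvd (k : Type*) [CommRing k] (n : ℕ) (hn : 0 < n)
    (lam : Fin n → ℤ) (hlam : Antitone lam) :
    ∃ s : Laurent k n, alternant k n (fun i => lam i + rho n i) = alternant k n (rho n) * s :=
  alternant_rho_dvd_general k n lam
end
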